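/- Let t, l, r, b form a cartesian (pullback) square of finite sets with top t : I → J, left l : I → K, right r : J → L, bottom b : K → L. With V(h) denoting the map sending an element to the singleton symmetric list on its image under h, and U(h) := D(V(h)) the dualized map, the two Kleisli composites U(r) ∘ V(b) and V(t) ∘ U(l) (as functions K → SList(J)) are pointwise isomorphic as symmetric lists: for every k ∈ K, the underlying multisets of (U(r) ∘ V(b))(k) and (V(t) ∘ U(l))(k) both equal the fiber r^{-1}({b(k)}), and since both symmetric lists are linear, there is a unique isomorphism between them. -/

import Mathlib

universe u

open CategoryTheory

namespace SListDev

/-- A wrapper around `List C`, serving as the type of objects of the quiver generating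
the category of symmetric lists. -/
structure SL (C : Type u) where
  toList : List C

variable {C : Type u}

/-- Consing an element onto a symmetric-list object. -/
def SL.cons (z : C) (a : SL C) : SL C := ⟨z :: a.toList⟩

/-- Generating morphisms for the category of symmetric lists: adjacent swaps and
cons of a generating morphism. -/
inductive Gen : SL C → SL C → Type u
  | swap (x y : C) (l : List C) : Gen ⟨x :: y :: l⟩ ⟨y :: x :: l⟩
  | cons (z : C) {l l' : List C} : Gen ⟨l⟩ ⟨l'⟩ → Gen ⟨z :: l⟩ ⟨z :: l'⟩

instance : Quiver (SL C) := ⟨Gen⟩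

/-- The free category on the generating quiver of symmetric lists. -/
abbrev FreeSL (C : Type u) := Paths (SL C)

/-- The extension of the `cons` operation to paths. -/
def consMap (z : C) : ∀ {a b : SL C}, Quiver.Path a b → Quiver.Path (SL.cons z a) (SL.cons z b)
  | _, _, Quiver.Path.nil => Quiver.Path.nil
  | _, _, Quiver.Path.cons p g => (consMap z p).cons (Gen.cons z g)

/-- The path consisting of a single swap. -/
def swapPath (x y : C) (l : List C) :
    Quiver.Path (⟨x :: y :: l⟩ : SL C) (⟨y :: x :: l⟩ : SL C) :=
  Quiver.Hom.toPath (Gen.swap x y l)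

/-- The relations defining the category of symmetric lists: naturality of the swap,
the symmetry relation, the hexagon (Yang–Baxter) relation, and functoriality
(congruence) of `cons`. -/
inductive Rel : HomRel (FreeSL C)
  | swap_naturality (X Y : C) {l l' : SL C} (f : Quiver.Path l l') :
      Rel ((swapPath X Y l.toList).comp (consMap Y (consMap X f)))
          ((consMap X (consMap Y f)).comp (swapPath X Y l'.toList))
  | swap_swap (X Y : C) (l : List C) :
      Rel ((swapPath X Y l).comp (swapPath Y X l)) Quiver.Path.nil
  | hexagon (X Y Z : C) (l : List C) :
      Rel ((swapPath X Y (Z :: l)).comp ((consMap Y (swapPath X Z l)).comp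
            (swapPath Y Z (X :: l))))
          ((consMap X (swapPath Y Z l)).comp ((swapPath X Z (Y :: l)).comp
            (consMap Z (swapPath X Y l))))
  | cons (z : C) {l l' : SL C} (f f' : Quiver.Path l l') :
      Rel f f' → Rel (consMap z f) (consMap z f')

end SListDev

/-- The category of symmetric lists on `C`, presented by generators and relations. -/
abbrev SList (C : Type u) := CategoryTheory.Quotient (SListDev.Rel (C := C))

namespace SList

variable {C : Type u}

/-- The symmetric list attached to a list. -/
def mk (l : List C) : SList C := ⟨⟨l⟩⟩

/-- The underlying list of a symmetric list. -/
def toList (L : SList C) : List C := L.as.toList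

/-- The length of a symmetric list. -/
def length (L : SList C) : ℕ := L.toList.length

/-- The underlying multiset of a symmetric list. -/
def mult (L : SList C) : Multiset C := (L.toList : Multiset C)

end SList

/-- The action on objects of the duality functor
`D_{J,K} : (SList K)^J → (SList J)^K` (defined as the composite of the equivalence of
symmetric lists with finite types over the base, the fiber equivalence, and the flip of
variables): the value of `D_{J,K}(X)` at `k` is the symmetric list of those `j ∈ J`,
each appearing with multiplicity `count(k, ‖X j‖)`. -/
noncomputable def SList.dualObj {J K : Type u} [Fintype J] [DecidableEq K]
    (X : J → SList K) : K → SList J := fun k =>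
  SList.mk ((Finset.univ : Finset J).toList.flatMap fun j =>
    List.replicate ((X j).mult.count k) j)

/-- `V(h) : A → SList B` sends `a` to the singleton symmetric list `[h a]`. -/
def SList.Vmap {A B : Type u} (h : A → B) : A → SList B := fun a => SList.mk [h a]

/-- `U(h) := D_{A,B}(V(h))` is the dualized map. -/
noncomputable def SList.Umap {A B : Type u} [Fintype A] [DecidableEq B]
    (h : A → B) : B → SList A := SList.dualObj (SList.Vmap h)

/-- The action on objects of the symmetric monoidal extension `Θ_g` of `g : K → SList L`. -/
def SList.thetaObj {K L : Type u} (g : K → SList L) (X : SList K) : SList L :=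
  SList.mk (X.toList.flatMap fun k => (g k).toList)

/-!
Both composites compute to the fiber `r⁻¹(b k)`: `Θ_{U(r)}(V(b) k) = U(r)(b k)` by the unit
law, while `Θ_{V(t)}(U(l) k)` is the image under `t` of the fiber `l⁻¹(k)`, which `t` maps
bijectively onto `r⁻¹(b k)` because the square is cartesian. Lists with equal multisets differ
by a permutation, hence by a composite of swaps, so the two symmetric lists are isomorphic.

Uniqueness is coherence for linear symmetric lists. Every morphism `x :: l ⟶ m` factors as a
morphism `l ⟶ pre ++ suf` of the tail, consed with `x`, followed by the canonical morphism moving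
`x` past `pre`: the naturality and hexagon relations push each generator through that canonical
morphism. When `m` is linear the position of `x` in `m` determines `pre` and `suf`, and induction
on the length of the source concludes.
-/

namespace SListDev

variable {C : Type u}

-- Pins the universe levels of the path category, which elaboration cannot infer.
instance : Category.{u} (FreeSL.{u} C) := Paths.categoryPaths.{u, u} (SL.{u} C)

@[simp] lemma consMap_nil (z : C) {a : SL C} :
    consMap z (Quiver.Path.nil : Quiver.Path a a) = Quiver.Path.nil := by
  simp [consMap]

@[simp] lemma consMap_cons (z : C) {a b c : SL C} (p : Quiver.Path a b) (g : Gen b c) :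
    consMap z (p.cons g) = (consMap z p).cons (Gen.cons z g) := by
  simp [consMap]; rfl

lemma consMap_comp (z : C) {a b c : SL C} (p : Quiver.Path a b) (q : Quiver.Path b c) :
    consMap z (p.comp q) = (consMap z p).comp (consMap z q) := by
  induction q with
  | nil => simp
  | cons q g ih => simp only [Quiver.Path.comp_cons, consMap_cons, ih]; rfl

end SListDev

namespace SList

open SListDev

variable {C : Type u}

def ofPath {a b : SL C} (p : Quiver.Path a b) : mk a.toList ⟶ mk b.toList :=
  (CategoryTheory.Quotient.functor Rel).map (X := (a : FreeSL C)) (Y := b) p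

@[simp] lemma ofPath_nil (a : SL C) : ofPath (Quiver.Path.nil : Quiver.Path a a) = 𝟙 _ :=
  (CategoryTheory.Quotient.functor Rel).map_id (X := (a : FreeSL C))

lemma ofPath_comp {a b c : SL C} (p : Quiver.Path a b) (q : Quiver.Path b c) :
    ofPath (p.comp q) = ofPath p ≫ ofPath q :=
  (CategoryTheory.Quotient.functor Rel).map_comp (X := (a : FreeSL C)) (Y := b) (Z := c) p q

lemma ofPath_eq_of_rel {a b : SL C} {p q : Quiver.Path a b} (h : Rel p q) :
    ofPath p = ofPath q :=
  CategoryTheory.Quotient.sound _ h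

lemma exists_ofPath_eq {l m : List C} (f : mk l ⟶ mk m) :
    ∃ p : Quiver.Path (⟨l⟩ : SL C) ⟨m⟩, ofPath p = f :=
  (CategoryTheory.Quotient.functor Rel).map_surjective (X := (show FreeSL C from ⟨l⟩))
    (Y := (show FreeSL C from ⟨m⟩)) f

def ofGen {a b : SL C} (g : Gen a b) : mk a.toList ⟶ mk b.toList :=
  ofPath (Quiver.Hom.toPath (V := SL C) g)

@[simp] lemma ofPath_cons {a b c : SL C} (p : Quiver.Path a b) (g : Gen b c) :
    ofPath (p.cons g) = ofPath p ≫ ofGen g :=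
  ofPath_comp p (Quiver.Hom.toPath (V := SL C) g)

def swapIso (x y : C) (l : List C) : mk (x :: y :: l) ≅ mk (y :: x :: l) where
  hom := ofGen (Gen.swap x y l)
  inv := ofGen (Gen.swap y x l)
  hom_inv_id := (ofPath_eq_of_rel (Rel.swap_swap x y l)).trans (ofPath_nil _)
  inv_hom_id := (ofPath_eq_of_rel (Rel.swap_swap y x l)).trans (ofPath_nil _)

@[simp] lemma ofGen_swap (x y : C) (l : List C) :
    ofGen (Gen.swap x y l) = (swapIso x y l).hom := rfl

@[simp] lemma swapIso_hom_comp_swapIso_hom (x y : C) (l : List C) :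
    (swapIso x y l).hom ≫ (swapIso y x l).hom = 𝟙 _ :=
  (swapIso x y l).hom_inv_id

def consFreeFunctor (z : C) : FreeSL C ⥤ SList C where
  obj a := mk (z :: SL.toList a)
  map p := ofPath (consMap z p)
  map_id a := (congrArg ofPath (@consMap_nil C z a)).trans (ofPath_nil _)
  map_comp {a b c} p q := (congrArg ofPath (@consMap_comp C z a b c p q)).trans (ofPath_comp _ _)

def consFunctor (z : C) : SList C ⥤ SList C :=
  CategoryTheory.Quotient.lift _ (consFreeFunctor z) fun _ _ p q h =>
    ofPath_eq_of_rel (Rel.cons z p q h)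

def consHom (z : C) {l l' : List C} (f : mk l ⟶ mk l') : mk (z :: l) ⟶ mk (z :: l') :=
  (consFunctor z).map f

@[simp] lemma consHom_id (z : C) (l : List C) : consHom z (𝟙 (mk l)) = 𝟙 _ :=
  (consFunctor z).map_id _

@[simp] lemma consHom_comp (z : C) {l₁ l₂ l₃ : List C} (f : mk l₁ ⟶ mk l₂)
    (g : mk l₂ ⟶ mk l₃) : consHom z (f ≫ g) = consHom z f ≫ consHom z g :=
  (consFunctor z).map_comp _ _

lemma ofGen_cons (z : C) {l l' : List C} (g : Gen (⟨l⟩ : SL C) ⟨l'⟩) :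
    ofGen (Gen.cons z g) = consHom z (ofGen g) := by
  change ofPath _ = ofPath (consMap z (Quiver.Path.nil.cons g))
  rw [consMap_cons, consMap_nil]
  rfl

lemma swapIso_hom_naturality (x y : C) {l l' : List C} (f : mk l ⟶ mk l') :
    (swapIso x y l).hom ≫ consHom y (consHom x f) =
      consHom x (consHom y f) ≫ (swapIso x y l').hom := by
  obtain ⟨p, rfl⟩ := exists_ofPath_eq f
  exact ofPath_eq_of_rel (Rel.swap_naturality x y p)

lemma swapIso_hom_hexagon (x y z : C) (l : List C) :
    (swapIso x y (z :: l)).hom ≫ consHom y (swapIso x z l).hom ≫ (swapIso y z (x :: l)).hom =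
      consHom x (swapIso y z l).hom ≫ (swapIso x z (y :: l)).hom ≫
        consHom z (swapIso x y l).hom :=
  ofPath_eq_of_rel (Rel.hexagon x y z l)

lemma nonempty_iso_of_perm {l₁ l₂ : List C} (h : l₁.Perm l₂) : Nonempty (mk l₁ ≅ mk l₂) := by
  induction h with
  | nil => exact ⟨Iso.refl _⟩
  | cons a _ ih => exact ih.map (consFunctor a).mapIso
  | swap a b l => exact ⟨swapIso b a l⟩
  | trans _ _ ih₁ ih₂ => exact ⟨ih₁.some.trans ih₂.some⟩

def insertHom (x : C) : (pre suf : List C) → (mk (x :: (pre ++ suf)) ⟶ mk (pre ++ x :: suf))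
  | [], _ => 𝟙 _
  | a :: pre, suf => (swapIso x a (pre ++ suf)).hom ≫ consHom a (insertHom x pre suf)

lemma insertHom_cons_cons_comp_swap (x a b : C) (pre suf : List C) :
    insertHom x (a :: b :: pre) suf ≫ (swapIso a b (pre ++ x :: suf)).hom =
      consHom x (swapIso a b (pre ++ suf)).hom ≫ insertHom x (b :: a :: pre) suf := by
  simp only [insertHom, List.cons_append, consHom_comp, Category.assoc]
  rw [← swapIso_hom_naturality a b (insertHom x pre suf),
    reassoc_of% (swapIso_hom_hexagon x a b (pre ++ suf))]

lemma insertHom_cons_comp_consHom {x : C} (a : C) {pre suf pre' suf' : List C}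
    {f : mk (pre ++ x :: suf) ⟶ mk (pre' ++ x :: suf')} {q : mk (pre ++ suf) ⟶ mk (pre' ++ suf')}
    (h : insertHom x pre suf ≫ f = consHom x q ≫ insertHom x pre' suf') :
    insertHom x (a :: pre) suf ≫ consHom a f =
      consHom x (consHom a q) ≫ insertHom x (a :: pre') suf' := by
  simp only [insertHom, Category.assoc, ← consHom_comp, h]
  rw [consHom_comp, reassoc_of% (swapIso_hom_naturality x a q)]

def FactorsThroughInsert (x : C) (l : List C) {m : List C} (f : mk (x :: l) ⟶ mk m) : Prop :=
  ∃ (pre suf : List C) (h : pre ++ x :: suf = m) (q : mk l ⟶ mk (pre ++ suf)),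
    f = consHom x q ≫ insertHom x pre suf ≫ eqToHom (congrArg mk h)

lemma FactorsThroughInsert.consHom_comp {x : C} {l₀ l₁ m : List C}
    (q : mk l₀ ⟶ mk l₁) {f : mk (x :: l₁) ⟶ mk m} (hf : FactorsThroughInsert x l₁ f) :
    FactorsThroughInsert x l₀ (consHom x q ≫ f) := by
  obtain ⟨pre, suf, h, q', rfl⟩ := hf
  exact ⟨pre, suf, h, q ≫ q', by rw [SList.consHom_comp, Category.assoc]⟩

lemma factorsThroughInsert_insertHom_comp_ofGen (x : C) :
    ∀ (pre suf : List C) {m : SL C} (g : Gen ⟨pre ++ x :: suf⟩ m),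
      FactorsThroughInsert x (pre ++ suf) (insertHom x pre suf ≫ ofGen g)
  | [], _, _, .swap _ y t => ⟨[y], t, rfl, 𝟙 _, by simp [insertHom]⟩
  | [], _, _, .cons _ g => ⟨[], _, rfl, ofGen g, by simp [insertHom, ofGen_cons]⟩
  | [a], suf, _, .swap _ _ _ => ⟨[], a :: suf, rfl, 𝟙 _, by simp [insertHom]⟩
  | a :: b :: pre, suf, _, .swap _ _ _ => ⟨b :: a :: pre, suf, rfl,
      (swapIso a b (pre ++ suf)).hom, by simpa using insertHom_cons_cons_comp_swap x a b pre suf⟩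
  | a :: pre, suf, _, .cons _ g => by
      obtain ⟨pre', suf', h, q, hq⟩ := factorsThroughInsert_insertHom_comp_ofGen x pre suf g
      cases h
      rw [eqToHom_refl, Category.comp_id] at hq
      exact ⟨a :: pre', suf', rfl, consHom a q, by
        simpa [ofGen_cons] using insertHom_cons_comp_consHom a hq⟩

lemma FactorsThroughInsert.comp_ofGen {x : C} {l m : List C} {f : mk (x :: l) ⟶ mk m}
    (hf : FactorsThroughInsert x l f) {b : SL C} (g : Gen ⟨m⟩ b) :
    FactorsThroughInsert x l (f ≫ ofGen g) := by
  obtain ⟨pre, suf, rfl, q, rfl⟩ := hf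
  rw [eqToHom_refl, Category.comp_id, Category.assoc]
  exact (factorsThroughInsert_insertHom_comp_ofGen x pre suf g).consHom_comp q

lemma factorsThroughInsert_ofPath (x : C) (l : List C) {b : SL C}
    (p : Quiver.Path ⟨x :: l⟩ b) : FactorsThroughInsert x l (ofPath p) := by
  induction p with
  | nil => exact ⟨[], l, rfl, 𝟙 _, by simp [insertHom]⟩
  | cons p g ih => rw [ofPath_cons]; exact ih.comp_ofGen g

lemma factorsThroughInsert {x : C} {l m : List C} (f : mk (x :: l) ⟶ mk m) :
    FactorsThroughInsert x l f := by
  obtain ⟨p, rfl⟩ := exists_ofPath_eq f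
  exact factorsThroughInsert_ofPath x l p

lemma exists_ofPath_eq_eqToHom_of_nil {b : SL C} (p : Quiver.Path ⟨[]⟩ b) :
    ∃ h : [] = b.toList, ofPath p = eqToHom (congrArg mk h) := by
  induction p with
  | nil => exact ⟨rfl, ofPath_nil _⟩
  | @cons mid _ p g ih =>
    obtain ⟨h, -⟩ := ih
    obtain ⟨l⟩ := mid
    change [] = l at h
    subst h
    nomatch g

lemma subsingleton_hom_of_nodup (l : List C) {m : List C} (hm : m.Nodup) :
    Subsingleton (mk l ⟶ mk m) := by
  induction l generalizing m with
  | nil =>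
    refine ⟨fun f g => ?_⟩
    obtain ⟨p, rfl⟩ := exists_ofPath_eq f
    obtain ⟨p', rfl⟩ := exists_ofPath_eq g
    obtain ⟨_, hp⟩ := exists_ofPath_eq_eqToHom_of_nil p
    obtain ⟨_, hp'⟩ := exists_ofPath_eq_eqToHom_of_nil p'
    rw [hp, hp']
  | cons x t ih =>
    refine ⟨fun f g => ?_⟩
    obtain ⟨pre, suf, rfl, q, rfl⟩ := factorsThroughInsert f
    obtain ⟨pre', suf', h, q', rfl⟩ := factorsThroughInsert g
    obtain ⟨hx, hnd⟩ := List.nodup_cons.mp (List.nodup_middle.mp hm)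
    rw [List.mem_append, not_or] at hx
    obtain ⟨rfl, -, rfl⟩ := (List.append_cons_inj_of_notMem hx.1 hx.2).mp h.symm
    rw [(ih hnd).elim q q']

lemma subsingleton_iso_of_nodup {X Y : SList C} (hY : Y.toList.Nodup) : Subsingleton (X ≅ Y) :=
  ⟨fun e₁ e₂ => Iso.ext ((subsingleton_hom_of_nodup X.toList hY).elim e₁.hom e₂.hom)⟩

lemma nonempty_iso_of_mult_eq {X Y : SList C} (h : X.mult = Y.mult) : Nonempty (X ≅ Y) :=
  nonempty_iso_of_perm (Multiset.coe_eq_coe.mp h)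

lemma nodup_toList_of_mult_eq_val {X : SList C} {s : Finset C} (h : X.mult = s.val) :
    X.toList.Nodup :=
  Multiset.coe_nodup.mp (show X.mult.Nodup from h ▸ s.nodup)

lemma thetaObj_Vmap {A B D : Type u} (g : B → SList D) (h : A → B) (a : A) :
    thetaObj g (Vmap h a) = g (h a) :=
  congrArg mk (List.flatMap_singleton _ _)

lemma mult_thetaObj_Vmap {A B : Type u} (h : A → B) (X : SList A) :
    (thetaObj (Vmap h) X).mult = X.mult.map h :=
  congrArg Multiset.ofList (List.flatMap_pure_eq_map h X.toList)

lemma mult_Umap {A B : Type u} [Fintype A] [DecidableEq B] (h : A → B) (y : B) :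
    (Umap h y).mult = (Finset.univ.filter fun a => h a = y).val := by
  change ((Finset.univ.toList.flatMap fun a =>
    List.replicate ((Vmap h a).mult.count y) a : List A) : Multiset A) = _
  rw [← Multiset.coe_bind, Finset.coe_toList, Finset.filter_val, Multiset.filter_eq_bind]
  refine Multiset.bind_congr fun a _ => ?_
  by_cases ha : h a = y
  · simp [ha, Vmap, mult, mk, toList]
  · simp [ha, Ne.symm ha, Vmap, mult, mk, toList]

end SList

lemma map_fiber_eq_fiber_of_cartesian {I J K L : Type u} [Fintype I] [Fintype J]
    [DecidableEq K] [DecidableEq L] (t : I → J) (l : I → K) (r : J → L) (b : K → L)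
    (comm : ∀ i, b (l i) = r (t i))
    (cartesian : ∀ (j : J) (k : K), r j = b k → ∃! i : I, t i = j ∧ l i = k) (k : K) :
    (Finset.univ.filter fun i => l i = k).val.map t =
      (Finset.univ.filter fun j => r j = b k).val := by
  have injOn : Set.InjOn t {i | l i = k} := by
    intro i hi i' hi' ht
    obtain ⟨_, -, uniq⟩ := cartesian (t i) k (by rw [← comm, hi])
    exact (uniq i ⟨rfl, hi⟩).trans (uniq i' ⟨ht.symm, hi'⟩).symm
  refine (Multiset.Nodup.ext ((Finset.nodup _).map_on fun i hi i' hi' =>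
    injOn (by simpa using hi) (by simpa using hi')) (Finset.nodup _)).mpr fun j => ?_
  simp only [Multiset.mem_map, Finset.mem_val, Finset.mem_filter, Finset.mem_univ, true_and]
  constructor
  · rintro ⟨i, hi, rfl⟩
    rw [← comm, hi]
  · intro hj
    obtain ⟨i, ⟨hti, hli⟩, -⟩ := cartesian j k hj
    exact ⟨i, hli, hti⟩

theorem SList.beckChevalley_pointwise_general {I J K L : Type u}
    [Fintype I] [Fintype J]
    [DecidableEq K] [DecidableEq L]
    (t : I → J) (l : I → K) (r : J → L) (b : K → L)
    (comm : ∀ i, b (l i) = r (t i))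
    (cartesian : ∀ (j : J) (k : K), r j = b k → ∃! i : I, t i = j ∧ l i = k)
    (k : K) :
    (SList.thetaObj (SList.Umap r) (SList.Vmap b k)).mult =
        (Finset.univ.filter fun j => r j = b k).val ∧
    (SList.thetaObj (SList.Vmap t) (SList.Umap l k)).mult =
        (Finset.univ.filter fun j => r j = b k).val ∧
    (SList.thetaObj (SList.Umap r) (SList.Vmap b k)).toList.Nodup ∧
    (SList.thetaObj (SList.Vmap t) (SList.Umap l k)).toList.Nodup ∧
    Nonempty ((SList.thetaObj (SList.Umap r) (SList.Vmap b k)) ≅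
        (SList.thetaObj (SList.Vmap t) (SList.Umap l k))) ∧
    Subsingleton ((SList.thetaObj (SList.Umap r) (SList.Vmap b k)) ≅
        (SList.thetaObj (SList.Vmap t) (SList.Umap l k))) := by
  have hA : (SList.thetaObj (SList.Umap r) (SList.Vmap b k)).mult =
      (Finset.univ.filter fun j => r j = b k).val := by
    rw [SList.thetaObj_Vmap, SList.mult_Umap]
  have hB : (SList.thetaObj (SList.Vmap t) (SList.Umap l k)).mult =
      (Finset.univ.filter fun j => r j = b k).val := by
    rw [SList.mult_thetaObj_Vmap, SList.mult_Umap,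
      map_fiber_eq_fiber_of_cartesian t l r b comm cartesian]
  have hBnd := SList.nodup_toList_of_mult_eq_val hB
  exact ⟨hA, hB, SList.nodup_toList_of_mult_eq_val hA, hBnd,
    SList.nonempty_iso_of_mult_eq (hA.trans hB.symm), SList.subsingleton_iso_of_nodup hBnd⟩

/-- given a cartesian square of finite sets with top `t : I → J`,
left `l : I → K`, right `r : J → L`, bottom `b : K → L`, the Kleisli composites
`U(r) ∘ V(b)` and `V(t) ∘ U(l)` (as functions `K → SList J`) are pointwise isomorphic:
for every `k`, both underlying multisets equal the fiber `r⁻¹({b k})`, both symmetric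
lists are linear, and there is a unique isomorphism between them. -/
theorem SList.beckChevalley_pointwise {I J K L : Type u}
    [Fintype I] [DecidableEq I] [Fintype J] [DecidableEq J]
    [Fintype K] [DecidableEq K] [Fintype L] [DecidableEq L]
    (t : I → J) (l : I → K) (r : J → L) (b : K → L)
    (comm : ∀ i, b (l i) = r (t i))
    (cartesian : ∀ (j : J) (k : K), r j = b k → ∃! i : I, t i = j ∧ l i = k)
    (k : K) :
    (SList.thetaObj (SList.Umap r) (SList.Vmap b k)).mult =
        (Finset.univ.filter fun j => r j = b k).val ∧
    (SList.thetaObj (SList.Vmap t) (SList.Umap l k)).mult =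
        (Finset.univ.filter fun j => r j = b k).val ∧
    (SList.thetaObj (SList.Umap r) (SList.Vmap b k)).toList.Nodup ∧
    (SList.thetaObj (SList.Vmap t) (SList.Umap l k)).toList.Nodup ∧
    Nonempty ((SList.thetaObj (SList.Umap r) (SList.Vmap b k)) ≅
        (SList.thetaObj (SList.Vmap t) (SList.Umap l k))) ∧
    Subsingleton ((SList.thetaObj (SList.Umap r) (SList.Vmap b k)) ≅
        (SList.thetaObj (SList.Vmap t) (SList.Umap l k))) :=
  SList.beckChevalley_pointwise_general t l r b comm cartesian k
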